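/- Let T: Z_p → Z_p be (p^{-k}, p^k) locally scaling. Then T is topologically conjugate to S^k: there exists a homeomorphism Φ: Z_p → Z_p with Φ ∘ T = S^k ∘ Φ. -/

import Mathlib

/-!
Code each point by its itinerary: `Φ x = ∑ₙ aₙ p^{kn}`, where `aₙ < p^k` is the residue of
`Tⁿ x` modulo `p^k`. Then `Φ x = a₀ + p^k Φ (T x)`, so `Φ (T x) = S^k (Φ x)`. The map `Φ` is an
isometry: if the residues of `x` and `y` differ, the ultrametric inequality gives
`‖Φ x - Φ y‖ = ‖a₀(x) - a₀(y)‖ = ‖x - y‖`; if they agree, `x` and `y` are `p^{-k}`-close and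
`‖Φ x - Φ y‖ = p^{-k} ‖Φ (T x) - Φ (T y)‖`, where `T` has multiplied the distance by `p^k`, so
induction on `⌈log_{p^k} ‖x - y‖⁻¹⌉` applies. An isometry of the compact space `ℤ_[p]` into
itself is onto, hence a homeomorphism.
-/

variable {p : ℕ} [hp : Fact p.Prime]

lemma padicShift_exists (x : ℤ_[p]) :
    ∃ y : ℤ_[p], x = ((PadicInt.toZMod x).val : ℤ_[p]) + p * y := by
  have h := PadicInt.toZMod_spec x
  rw [PadicInt.maximalIdeal_eq_span_p, Ideal.mem_span_singleton] at h
  obtain ⟨y, hy⟩ := h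
  refine ⟨y, ?_⟩
  rw [← ZMod.natCast_val] at hy
  linear_combination hy

/-- The `p`-adic shift, deleting the first digit of the `p`-adic expansion. -/
noncomputable def padicShift (x : ℤ_[p]) : ℤ_[p] :=
  Classical.choose (padicShift_exists x)

open Function

theorem Isometry.iterate {X : Type*} [PseudoEMetricSpace X] {f : X → X} (hf : Isometry f)
    (n : ℕ) : Isometry f^[n] := by
  induction n with
  | zero => exact isometry_id
  | succ n ih => exact ih.comp hf

theorem Isometry.surjective_of_compactSpace {X : Type*} [MetricSpace X] [CompactSpace X]
    {f : X → X} (hf : Isometry f) : Surjective f := by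
  intro x
  suffices x ∈ closure (Set.range f) by
    rwa [hf.isClosedEmbedding.isClosed_range.closure_eq] at this
  rw [Metric.mem_closure_iff]
  intro ε hε
  -- The orbit of `x` has a Cauchy subsequence, and `f^[m]` preserves distances, so
  -- `dist x (f^[n - m] x) = dist (f^[m] x) (f^[n] x)` is small for suitable `m < n`.
  obtain ⟨a, -, φ, hφ, hconv⟩ := isCompact_univ.tendsto_subseq fun n => Set.mem_univ (f^[n] x)
  obtain ⟨N, hN⟩ := Metric.cauchySeq_iff'.mp hconv.cauchySeq ε hε
  set m := φ N
  set n := φ (N + 1)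
  have hmn : m < n := hφ N.lt_succ_self
  have hdist : dist x (f^[n - m] x) = dist (f^[n] x) (f^[m] x) := by
    rw [dist_comm, ← (hf.iterate m).dist_eq, ← iterate_add_apply, Nat.add_sub_cancel' hmn.le]
  refine ⟨f^[n - m] x, ⟨f^[n - m - 1] x, ?_⟩, hdist ▸ hN (N + 1) N.le_succ⟩
  rw [← iterate_succ_apply' f]
  congr 1
  omega

theorem IsUltrametricDist.dist_eq_of_dist_lt {X : Type*} [PseudoMetricSpace X]
    [IsUltrametricDist X] {x y a b : X} (hx : dist x a < dist a b) (hy : dist y b < dist a b) :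
    dist x y = dist a b := by
  have hxb : dist x b = dist a b := by
    rw [dist_eq_max_of_dist_ne_dist x a b hx.ne, max_eq_right hx.le]
  rw [dist_eq_max_of_dist_ne_dist x b y (by rw [hxb, dist_comm b]; exact hy.ne'), hxb,
    max_eq_left (by rw [dist_comm]; exact hy.le)]

namespace PadicInt

theorem norm_sub_appr_le (k : ℕ) (x : ℤ_[p]) : ‖x - x.appr k‖ ≤ (p : ℝ) ^ (-(k : ℤ)) :=
  (norm_le_pow_iff_mem_span_pow _ k).mpr (appr_spec k x)

theorem eq_of_norm_natCast_sub_le {k a b : ℕ} (ha : a < p ^ k) (hb : b < p ^ k)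
    (h : ‖(a : ℤ_[p]) - b‖ ≤ (p : ℝ) ^ (-(k : ℤ))) : a = b := by
  have hab := zmod_congr_of_sub_mem_span k (a : ℤ_[p]) a b (by simp)
    ((norm_le_pow_iff_mem_span_pow _ k).mp h)
  simpa [ZMod.val_cast_of_lt ha, ZMod.val_cast_of_lt hb] using congrArg ZMod.val hab

theorem norm_sub_le_of_appr_eq {k : ℕ} {x y : ℤ_[p]} (h : x.appr k = y.appr k) :
    ‖x - y‖ ≤ (p : ℝ) ^ (-(k : ℤ)) := by
  have hx := norm_sub_appr_le k x
  have hy := norm_sub_appr_le k y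
  rw [h] at hx
  simp only [← dist_eq_norm] at hx hy ⊢
  exact (dist_triangle_max x _ y).trans (max_le hx (dist_comm y _ ▸ hy))

theorem norm_sub_eq_of_appr_ne {k : ℕ} {x y x' y' : ℤ_[p]} (hne : x.appr k ≠ y.appr k)
    (hx : ‖x' - x.appr k‖ ≤ (p : ℝ) ^ (-(k : ℤ))) (hy : ‖y' - y.appr k‖ ≤ (p : ℝ) ^ (-(k : ℤ))) :
    ‖x' - y'‖ = ‖x - y‖ := by
  have hgap : (p : ℝ) ^ (-(k : ℤ)) < ‖((x.appr k : ℕ) : ℤ_[p]) - y.appr k‖ :=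
    lt_of_not_ge (mt (eq_of_norm_natCast_sub_le (appr_lt x k) (appr_lt y k)) hne)
  have hx₀ := norm_sub_appr_le k x
  have hy₀ := norm_sub_appr_le k y
  simp only [← dist_eq_norm] at hgap hx hy hx₀ hy₀ ⊢
  rw [IsUltrametricDist.dist_eq_of_dist_lt (hx.trans_lt hgap) (hy.trans_lt hgap),
    IsUltrametricDist.dist_eq_of_dist_lt (hx₀.trans_lt hgap) (hy₀.trans_lt hgap)]

end PadicInt

theorem padicShift_natCast_add_mul {c : ℕ} (hc : c < p) (y : ℤ_[p]) :
    padicShift ((c : ℤ_[p]) + (p : ℤ_[p]) * y) = y := by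
  set x : ℤ_[p] := (c : ℤ_[p]) + (p : ℤ_[p]) * y
  have hx : x = ((PadicInt.toZMod x).val : ℤ_[p]) + p * padicShift x :=
    Classical.choose_spec (padicShift_exists x)
  have hdigit : ((PadicInt.toZMod x).val : ℤ_[p]) = c := by
    simp [x, ZMod.val_cast_of_lt hc]
  refine mul_left_cancel₀ (Nat.cast_ne_zero.mpr hp.out.ne_zero : (p : ℤ_[p]) ≠ 0) ?_
  linear_combination -hx - hdigit

theorem padicShift_iterate_natCast_add_pow_mul {k a : ℕ} (ha : a < p ^ k) (y : ℤ_[p]) :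
    padicShift^[k] ((a : ℤ_[p]) + (p : ℤ_[p]) ^ k * y) = y := by
  induction k generalizing a y with
  | zero => simp_all
  | succ k ih =>
    have hsplit : (a : ℤ_[p]) + (p : ℤ_[p]) ^ (k + 1) * y
        = ((a % p : ℕ) : ℤ_[p]) + p * ((a / p : ℕ) + p ^ k * y) := by
      conv_lhs => rw [← Nat.mod_add_div a p]
      push_cast
      ring
    rw [iterate_succ_apply, hsplit, padicShift_natCast_add_mul (Nat.mod_lt _ hp.out.pos)]
    exact ih (Nat.div_lt_of_lt_mul (by rwa [← pow_succ'])) _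

noncomputable def padicItinerary (k : ℕ) (T : ℤ_[p] → ℤ_[p]) (x : ℤ_[p]) : ℤ_[p] :=
  ∑' n : ℕ, ((T^[n] x).appr k : ℤ_[p]) * (p : ℤ_[p]) ^ (k * n)

section padicItinerary

variable {k : ℕ}

theorem summable_padicItinerary (hk : 1 ≤ k) (T : ℤ_[p] → ℤ_[p]) (x : ℤ_[p]) :
    Summable fun n : ℕ => ((T^[n] x).appr k : ℤ_[p]) * (p : ℤ_[p]) ^ (k * n) := by
  have hp1 : (1 : ℝ) < p := mod_cast hp.out.one_lt
  refine Summable.of_norm_bounded (g := fun n : ℕ => (((p : ℝ)⁻¹) ^ k) ^ n)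
    (summable_geometric_of_lt_one (by positivity)
      (pow_lt_one₀ (by positivity) (inv_lt_one_of_one_lt₀ hp1) (by omega))) fun n => ?_
  calc ‖((T^[n] x).appr k : ℤ_[p]) * (p : ℤ_[p]) ^ (k * n)‖
      ≤ ‖(p : ℤ_[p]) ^ (k * n)‖ := by
        rw [norm_mul]
        exact mul_le_of_le_one_left (norm_nonneg _) (PadicInt.norm_le_one _)
    _ = (((p : ℝ)⁻¹) ^ k) ^ n := by
        rw [PadicInt.norm_p_pow, ← pow_mul, zpow_neg, zpow_natCast, inv_pow]

theorem padicItinerary_eq (hk : 1 ≤ k) (T : ℤ_[p] → ℤ_[p]) (x : ℤ_[p]) :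
    padicItinerary k T x = (x.appr k : ℤ_[p]) + p ^ k * padicItinerary k T (T x) := by
  rw [padicItinerary, (summable_padicItinerary hk T x).tsum_eq_zero_add, padicItinerary,
    ← (summable_padicItinerary hk T (T x)).tsum_mul_left]
  simp only [iterate_zero_apply, iterate_succ_apply, mul_zero, pow_zero, mul_one, mul_add,
    pow_add]
  congr 1
  exact tsum_congr fun n => by ring

theorem norm_padicItinerary_sub_appr_le (hk : 1 ≤ k) (T : ℤ_[p] → ℤ_[p]) (x : ℤ_[p]) :
    ‖padicItinerary k T x - x.appr k‖ ≤ (p : ℝ) ^ (-(k : ℤ)) := by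
  rw [padicItinerary_eq hk, add_sub_cancel_left, norm_mul, PadicInt.norm_p_pow]
  exact mul_le_of_le_one_right (by positivity) (PadicInt.norm_le_one _)

theorem norm_padicItinerary_sub {T : ℤ_[p] → ℤ_[p]} (hk : 1 ≤ k)
    (hT : ∀ x y : ℤ_[p], ‖x - y‖ ≤ (p : ℝ) ^ (-(k : ℤ)) → ‖T x - T y‖ = (p : ℝ) ^ k * ‖x - y‖)
    (x y : ℤ_[p]) : ‖padicItinerary k T x - padicItinerary k T y‖ = ‖x - y‖ := by
  have hpk : (1 : ℝ) < (p : ℝ) ^ k := one_lt_pow₀ (mod_cast hp.out.one_lt) (by omega)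
  suffices ∀ n : ℕ, ∀ x y : ℤ_[p], 1 < ((p : ℝ) ^ k) ^ n * ‖x - y‖ →
      ‖padicItinerary k T x - padicItinerary k T y‖ = ‖x - y‖ by
    rcases eq_or_ne x y with rfl | hxy
    · simp
    obtain ⟨n, hn⟩ := pow_unbounded_of_one_lt ‖x - y‖⁻¹ hpk
    exact this n x y <| by
      rwa [inv_lt_iff_one_lt_mul₀ (norm_pos_iff.mpr (sub_ne_zero.mpr hxy))] at hn
  intro n
  induction n with
  | zero =>
    intro x y h
    rw [pow_zero, one_mul] at h
    exact absurd (PadicInt.norm_le_one _) h.not_ge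
  | succ n ih =>
    intro x y h
    by_cases happr : x.appr k = y.appr k
    · have hTxy := hT x y (PadicInt.norm_sub_le_of_appr_eq happr)
      rw [padicItinerary_eq hk T x, padicItinerary_eq hk T y, happr, add_sub_add_left_eq_sub,
        ← mul_sub, norm_mul, PadicInt.norm_p_pow,
        ih (T x) (T y) (by rwa [hTxy, ← mul_assoc, ← pow_succ]), hTxy, ← mul_assoc, zpow_neg,
        zpow_natCast, inv_mul_cancel₀ (by positivity), one_mul]
    · exact PadicInt.norm_sub_eq_of_appr_ne happr (norm_padicItinerary_sub_appr_le hk T x)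
        (norm_padicItinerary_sub_appr_le hk T y)

end padicItinerary

/-- a `(p^{-k}, p^k)` locally scaling map is topologically conjugate to
the `k`-fold iterate of the `p`-adic shift. -/
theorem locallyScaling_conjugate_shift (k : ℕ) (hk : 1 ≤ k) (T : ℤ_[p] → ℤ_[p])
    (hT : ∀ x y : ℤ_[p], ‖x - y‖ ≤ (p : ℝ) ^ (-(k : ℤ)) →
      ‖T x - T y‖ = (p : ℝ) ^ (k : ℕ) * ‖x - y‖) :
    ∃ Φ : ℤ_[p] ≃ₜ ℤ_[p], ∀ x : ℤ_[p], Φ (T x) = padicShift^[k] (Φ x) := by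
  have hΦ : Isometry (padicItinerary k T) := Isometry.of_dist_eq fun x y => by
    simpa only [dist_eq_norm] using norm_padicItinerary_sub hk hT x y
  let Φ : ℤ_[p] ≃ ℤ_[p] :=
    Equiv.ofBijective _ ⟨hΦ.injective, hΦ.surjective_of_compactSpace⟩
  refine ⟨Φ.toHomeomorphOfIsInducing hΦ.isEmbedding.isInducing, fun x => ?_⟩
  change padicItinerary k T (T x) = padicShift^[k] (padicItinerary k T x)
  rw [padicItinerary_eq hk T x, padicShift_iterate_natCast_add_pow_mul (PadicInt.appr_lt x k)]
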